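/- Let M be a strongly base orderable matroid on a finite ground set S and let G = (S, E) be a simple graph on vertex set S. Define S' = {(v, e) : e ∈ E, v ∈ e} and the projection p : S' → S, p(v, e) = v, and let M' be a matroid on S' whose independent sets are exactly the sets I' ⊆ S' such that p is injective on I' and p(I') is independent in M. Then M' is strongly base orderable. -/

import Mathlib

/-!
The matroid `M'` is the pullback `M.comapOn S' p`, so it suffices that strong base orderability
survives restriction and pullback (for matroids of finite rank).

For a restriction `M ↾ R` with bases `I`, `J`, extend `I` by `D` to a base of `M`; then `J ∪ D`
is a base as well. An exchange bijection `σ : I ∪ D → J ∪ D` is made to fix `D` pointwise by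
removing the elements `e ∈ D` one at a time, rerouting `σ⁻¹ e ↦ σ e`.

For a pullback, the exchange bijection `π` of the projections of two bases lifts through `p`.
Since bases are finite, `π(K)` and `I \ K` are disjoint, so `p` stays injective on the lifted
exchanged set.
-/

open Finset

variable {α : Type*} [DecidableEq α]

/-- A matroid is strongly base orderable if for every pair of bases `I`, `J` there is a
bijection `π : I → J` such that for every `K ⊆ I`, the set `π(K) ∪ (I \ K)` is a base. -/
def Matroid.StronglyBaseOrderable {β : Type*} (M : Matroid β) : Prop :=
  ∀ I J : Set β, M.IsBase I → M.IsBase J →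
    ∃ π : β → β, Set.BijOn π I J ∧ ∀ K ⊆ I, M.IsBase (π '' K ∪ (I \ K))

/-- The ground set of the parity instance: one copy `(v, e)` of each vertex `v`
for every edge `e` of `G` incident to it. -/
def ParityGround (G : SimpleGraph α) : Set (α × Sym2 α) :=
  {p | p.2 ∈ G.edgeSet ∧ p.1 ∈ p.2}

open Set

section Exchange

variable {β : Type*} {P : Set β → Prop} {σ : β → β} {A B C K : Set β}

theorem exists_bijOn_sdiff_singleton_of_exchange {e : β} (hσ : BijOn σ A B) (heA : e ∈ A)
    (heB : e ∈ B) (hP : ∀ K ⊆ A, P (σ '' K ∪ (A \ K))) :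
    ∃ π : β → β, BijOn π (A \ {e}) (B \ {e}) ∧
      ∀ K ⊆ A \ {e}, P (π '' K ∪ ((A \ {e}) \ K) ∪ {e}) := by
  classical
  obtain ⟨a, haA, hae⟩ := hσ.surjOn heB
  -- `π = σ ∘ (a e)` sends `a = σ⁻¹ e` to `σ e`, skipping `e`; for `a ∈ K` the exchanged set
  -- is that of `insert e K` under `σ`.
  refine ⟨σ ∘ Equiv.swap a e, ?_, fun K hK => ?_⟩
  · rcases eq_or_ne a e with rfl | hne
    · simpa [Equiv.swap_self, hae] using hσ.sdiff_singleton haA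
    have hswap : BijOn (Equiv.swap a e) (A \ {e}) (A \ {a}) := by
      convert Equiv.swap_bijOn_exchange (s := A \ {e}) ⟨haA, hne⟩ (fun h => h.2 rfl) using 1
      ext x; by_cases x = e <;> aesop
    simpa [hae] using (hσ.sdiff_singleton haA).comp hswap
  by_cases haK : a ∈ K
  · have hKe : e ∉ K := fun h => (hK h).2 rfl
    have hsplit : (σ ∘ Equiv.swap a e) '' K ∪ ((A \ {e}) \ K) ∪ {e} =
        σ '' insert e K ∪ (A \ insert e K) := by
      ext x
      simp only [Set.mem_union, Set.mem_image, Function.comp_apply, Set.mem_sdiff,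
        Set.mem_singleton_iff, Set.mem_insert_iff]
      grind
    rw [hsplit]
    exact hP _ (Set.insert_subset heA fun x hx => (hK hx).1)
  · have hfix : ∀ x ∈ K, Equiv.swap a e x = x := fun x hx =>
      Equiv.swap_apply_of_ne_of_ne (fun h => haK (h ▸ hx)) (hK hx).2
    have hsplit : (σ ∘ Equiv.swap a e) '' K ∪ ((A \ {e}) \ K) ∪ {e} = σ '' K ∪ (A \ K) := by
      rw [Set.image_comp, Set.image_congr hfix, Set.image_id', Set.union_assoc]
      ext x
      simp only [Set.mem_union, Set.mem_sdiff, Set.mem_singleton_iff]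
      grind
    rw [hsplit]
    exact hP K fun x hx => (hK hx).1

theorem exists_bijOn_sdiff_of_exchange (hσ : BijOn σ A B) (hC : C.Finite) (hCA : C ⊆ A)
    (hCB : C ⊆ B) (hP : ∀ K ⊆ A, P (σ '' K ∪ (A \ K))) :
    ∃ π : β → β, BijOn π (A \ C) (B \ C) ∧ ∀ K ⊆ A \ C, P (π '' K ∪ ((A \ C) \ K) ∪ C) := by
  induction C, hC using Set.Finite.induction_on generalizing P with
  | empty => exact ⟨σ, by simpa using hσ, by simpa using hP⟩
  | @insert e C heC _ ih =>
    obtain ⟨π, hπ, hπP⟩ := ih ((Set.subset_insert e C).trans hCA)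
      ((Set.subset_insert e C).trans hCB) hP
    obtain ⟨ρ, hρ, hρP⟩ := exists_bijOn_sdiff_singleton_of_exchange (P := fun X => P (X ∪ C)) hπ
      ⟨hCA (Set.mem_insert e C), heC⟩ ⟨hCB (Set.mem_insert e C), heC⟩ hπP
    have hAC : (A \ C) \ {e} = A \ insert e C := by rw [Set.sdiff_sdiff, Set.union_singleton]
    refine ⟨ρ, by rwa [hAC, Set.sdiff_sdiff, Set.union_singleton] at hρ, fun K hK => ?_⟩
    have hρK := hρP K (hAC ▸ hK)
    rwa [hAC, Set.union_assoc _ {e}, Set.singleton_union] at hρK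

theorem disjoint_image_sdiff_of_encard_union_eq (hA : A.Finite) (hσ : InjOn σ A) (hK : K ⊆ A)
    (h : (σ '' K ∪ (A \ K)).encard = A.encard) : Disjoint (σ '' K) (A \ K) := by
  have hsum := Set.encard_union_add_encard_inter (σ '' K) (A \ K)
  rw [h, (hσ.mono hK).encard_image, add_comm K.encard,
    Set.encard_sdiff_add_encard_of_subset hK] at hsum
  rw [Set.disjoint_iff_inter_eq_empty, ← Set.encard_eq_zero]
  exact WithTop.add_left_cancel (Set.encard_ne_top_iff.2 hA) (hsum.trans (add_zero _).symm)

end Exchange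

namespace Matroid

variable {β : Type*} {M : Matroid β} [M.RankFinite]

lemma IsBasis'.isBasis'_iff_isBase_union {I D R X : Set β} (hI : M.IsBasis' I R)
    (hID : M.IsBase (I ∪ D)) (hDR : Disjoint D R) (hXR : X ⊆ R) :
    M.IsBasis' X R ↔ M.IsBase (X ∪ D) := by
  have hIcard : (I ∪ D).encard = I.encard + D.encard :=
    Set.encard_union_eq (hDR.mono_right hI.subset).symm
  have hXcard : (X ∪ D).encard = X.encard + D.encard :=
    Set.encard_union_eq (hDR.mono_right hXR).symm
  have hDfin : D.Finite := hID.finite.subset Set.subset_union_right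
  constructor
  · intro hX
    have hrk : M.eRk (X ∪ D) = M.eRank := by
      rw [hX.eRk_eq_eRk_union, ← hI.eRk_eq_eRk_union, hID.eRk_eq_eRank]
    have hind : M.Indep (X ∪ D) := (M.isRkFinite_set _).indep_of_encard_le_eRk <| by
      rw [hrk, ← hID.encard_eq_eRank, hXcard, hIcard, hX.encard_eq_encard hI]
    exact hind.isBase_of_eRk_ge hind.finite hrk.ge
  · intro hXD
    have hX : M.Indep X := hXD.indep.subset Set.subset_union_left
    refine (isBasis'_iff_indep_encard_eq_of_finite hX.finite).2 ⟨hXR, hX, ?_⟩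
    have hcard := hXD.encard_eq_encard_of_isBase hID
    rw [hXcard, hIcard] at hcard
    rw [hI.eRk_eq_encard]
    exact WithTop.add_right_cancel (Set.encard_ne_top_iff.2 hDfin) hcard

theorem StronglyBaseOrderable.restrict (h : M.StronglyBaseOrderable) (R : Set β) :
    (M ↾ R).StronglyBaseOrderable := by
  intro I J hI hJ
  rw [isBase_restrict_iff'] at hI hJ
  obtain ⟨B, hB, hIB⟩ := hI.indep.exists_isBase_superset
  set D := B \ I
  have hDR : Disjoint D R := Set.disjoint_left.2 fun x hx hxR => hx.2 <| by
    rw [hI.eq_of_subset_indep (hB.indep.subset (Set.insert_subset hx.1 hIB))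
      (Set.subset_insert x I) (Set.insert_subset hxR hI.subset)]
    exact Set.mem_insert x I
  rw [← Set.union_sdiff_cancel hIB] at hB
  have hJD : M.IsBase (J ∪ D) := (hI.isBasis'_iff_isBase_union hB hDR hJ.subset).1 hJ
  obtain ⟨σ, hσ, hσB⟩ := h _ _ hB hJD
  obtain ⟨π, hπ, hπB⟩ := exists_bijOn_sdiff_of_exchange hσ (hB.finite.subset Set.subset_union_right)
    Set.subset_union_right Set.subset_union_right hσB
  have hIsdiff : (I ∪ D) \ D = I :=
    Set.union_sdiff_cancel_right (hDR.mono_right hI.subset).symm.inter_eq.subset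
  have hJsdiff : (J ∪ D) \ D = J :=
    Set.union_sdiff_cancel_right (hDR.mono_right hJ.subset).symm.inter_eq.subset
  rw [hIsdiff, hJsdiff] at hπ
  rw [hIsdiff] at hπB
  refine ⟨π, hπ, fun K hK => ?_⟩
  rw [isBase_restrict_iff', hI.isBasis'_iff_isBase_union hB hDR]
  · exact hπB K hK
  exact Set.union_subset (Set.image_subset_iff.2 fun x hx => hJ.subset (hπ.mapsTo (hK hx)))
    (Set.sdiff_subset.trans hI.subset)

theorem StronglyBaseOrderable.comapOn {γ : Type*} (h : M.StronglyBaseOrderable) (E : Set γ) (f : γ → β) :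
    (M.comapOn E f).StronglyBaseOrderable := by
  intro I' J' hI' hJ'
  rcases isEmpty_or_nonempty γ with hγ | hγ
  · exact ⟨id, by simp [Set.eq_empty_of_isEmpty], fun K _ => by
      simpa [Set.eq_empty_of_isEmpty] using hI'⟩
  rw [comapOn_isBase_iff] at hI' hJ'
  obtain ⟨hI, hIinj, hIE⟩ := hI'
  obtain ⟨hJ, hJinj, hJE⟩ := hJ'
  obtain ⟨π, hπ, hπB⟩ := h.restrict (f '' E) _ _ hI.isBase_restrict hJ.isBase_restrict
  set g := Function.invFunOn f J'
  have hg : BijOn g (f '' J') J' := hJinj.bijOn_image.symm hJinj.bijOn_image.invOn_invFunOn.symm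
  refine ⟨g ∘ π ∘ f, hg.comp (hπ.comp hIinj.bijOn_image), fun K' hK' => ?_⟩
  have hfg : ∀ x ∈ K', f ((g ∘ π ∘ f) x) = π (f x) := fun x hx =>
    hJinj.bijOn_image.invOn_invFunOn.2 (hπ.mapsTo (Set.mem_image_of_mem f (hK' hx)))
  have hfK : f '' ((g ∘ π ∘ f) '' K') = π '' (f '' K') := by
    rw [Set.image_image, Set.image_congr hfg, Set.image_image]
  have hfI : f '' (I' \ K') = f '' I' \ f '' K' := hIinj.image_sdiff_subset hK'
  have hbase := hπB (f '' K') (Set.image_mono hK')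
  rw [isBase_restrict_iff'] at hbase
  have hdisj : Disjoint (π '' (f '' K')) (f '' I' \ f '' K') :=
    disjoint_image_sdiff_of_encard_union_eq hI.indep.finite hπ.injOn (Set.image_mono hK')
      (hbase.encard_eq_encard hI)
  have hgK : (g ∘ π ∘ f) '' K' ⊆ J' := fun y ⟨x, hx, hxy⟩ =>
    hxy ▸ hg.mapsTo (hπ.mapsTo (Set.mem_image_of_mem f (hK' hx)))
  rw [comapOn_isBase_iff, Set.image_union, hfK, hfI]
  refine ⟨hbase, ?_, Set.union_subset (hgK.trans hJE) (Set.sdiff_subset.trans hIE)⟩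
  rw [← hfK, ← hfI] at hdisj
  exact (Set.injOn_union hdisj.of_image).2 ⟨hJinj.mono hgK, hIinj.mono Set.sdiff_subset,
    fun x hx y hy => hdisj.ne_of_mem (Set.mem_image_of_mem f hx) (Set.mem_image_of_mem f hy)⟩

end Matroid

theorem parity_matroid_stronglyBaseOrderable_general
    (M : Matroid α) (S : Finset α) (hground : M.E = ↑S)
    (hsbo : M.StronglyBaseOrderable)
    (G : SimpleGraph α)
    (M' : Matroid (α × Sym2 α)) (hM'ground : M'.E = ParityGround G)
    (hM'indep : ∀ I' : Set (α × Sym2 α), M'.Indep I' ↔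
      I' ⊆ ParityGround G ∧ Set.InjOn Prod.fst I' ∧ M.Indep (Prod.fst '' I')) :
    M'.StronglyBaseOrderable := by
  have : M.Finite := ⟨hground ▸ S.finite_toSet⟩
  have hM' : M' = M.comapOn (ParityGround G) Prod.fst :=
    Matroid.ext_indep hM'ground fun I' _ => by
      rw [hM'indep, Matroid.comapOn_indep_iff]
      tauto
  rw [hM']
  exact hsbo.comapOn _ _

theorem parity_matroid_stronglyBaseOrderable
    (M : Matroid α) (S : Finset α) (hground : M.E = ↑S)
    (hsbo : M.StronglyBaseOrderable)
    (G : SimpleGraph α) (hGS : ∀ a b : α, G.Adj a b → a ∈ S)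
    (M' : Matroid (α × Sym2 α)) (hM'ground : M'.E = ParityGround G)
    (hM'indep : ∀ I' : Set (α × Sym2 α), M'.Indep I' ↔
      I' ⊆ ParityGround G ∧ Set.InjOn Prod.fst I' ∧ M.Indep (Prod.fst '' I')) :
    M'.StronglyBaseOrderable :=
  parity_matroid_stronglyBaseOrderable_general M S hground hsbo G M' hM'ground hM'indep
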